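/- arXiv:2409.05599 — 2 statements merged into one kernel-verified Lean document; each statement's English description precedes it below -/
import Mathlib

section
/- Let g : Γ → Γ be a map of a finite graph such that each vertex of Γ has at least 3 gates, the set of nonprincipal vertices is nPVΓ, the Euler characteristic of Γ is 1 - r, and the rotationless index satisfies i = Σ_{v principal} (1 - |Gates(v)|/2). Then the index deficit ID = i + r - 1 satisfies ID ≥ (1/2)|nPVΓ| + (1/2)·DS(g), where DS(g) = Σ_v Σ_{G ∈ Gates(v)} (|G| - 1) is the directional surplus. If moreover DS(g) ≥ 1, then ID ≥ (1/2)|nPVΓ| + 1/2. -/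
open Finset

/-- index deficit bound for fully preprincipal train track maps:
`ID ≥ (1/2)|nPVΓ| + (1/2)DS(g)`, and if `DS(g) ≥ 1` then `ID ≥ (1/2)|nPVΓ| + 1/2`. -/
theorem stmt1 {V : Type*} [Fintype V] (gates : V → Multiset ℕ)
    (r : ℤ) (E : ℕ)
    (hgate_pos : ∀ v, ∀ s ∈ gates v, 1 ≤ s)
    (hgates3 : ∀ v, 3 ≤ Multiset.card (gates v))
    (hdir : 2 * E = ∑ v, (gates v).sum)
    (hchi : (Fintype.card V : ℤ) - E = 1 - r)
    (principal : V → Prop) [DecidablePred principal]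
    (i ID DS : ℚ)
    (hi : i = ∑ v ∈ Finset.univ.filter principal, (1 - (Multiset.card (gates v) : ℚ) / 2))
    (hID : ID = i + r - 1)
    (hDS : DS = ∑ v, (((gates v).sum : ℚ) - (Multiset.card (gates v) : ℚ))) :
    ID ≥ (1/2) * ((Finset.univ.filter (fun v => ¬ principal v)).card : ℚ) + (1/2) * DS ∧
      (1 ≤ DS →
        ID ≥ (1/2) * ((Finset.univ.filter (fun v => ¬ principal v)).card : ℚ) + 1/2) := by
  have hE2 : (2 * E : ℚ) = ∑ v, ((gates v).sum : ℚ) := by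
    exact_mod_cast hdir
  have hr : (r : ℚ) - 1 = (E : ℚ) - Fintype.card V := by
    have : ((Fintype.card V : ℤ) : ℚ) - E = 1 - r := by exact_mod_cast congrArg (Int.cast : ℤ → ℚ) hchi
    push_cast at this ⊢; linarith
  have hsplit : ∀ f : V → ℚ,
      ∑ v ∈ Finset.univ.filter principal, f v
        + ∑ v ∈ Finset.univ.filter (fun v => ¬ principal v), f v = ∑ v, f v := fun f =>
    Finset.sum_filter_add_sum_filter_not Finset.univ principal f
  have hcardV : (Fintype.card V : ℚ) = ∑ v : V, (1 : ℚ) := by simp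
  have key : ID = ∑ v ∈ Finset.univ.filter (fun v => ¬ principal v),
      ((Multiset.card (gates v) : ℚ) / 2 - 1) + DS / 2 := by
    have h1 := hsplit (fun v => 1 - (Multiset.card (gates v) : ℚ) / 2)
    have h2 : ∑ v : V, (1 - (Multiset.card (gates v) : ℚ) / 2)
        = (Fintype.card V : ℚ) - (∑ v, (Multiset.card (gates v) : ℚ)) / 2 := by
      rw [Finset.sum_sub_distrib, ← Finset.sum_div, hcardV]
    have h3 : ∑ v ∈ Finset.univ.filter (fun v => ¬ principal v),
        ((Multiset.card (gates v) : ℚ) / 2 - 1)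
        = - ∑ v ∈ Finset.univ.filter (fun v => ¬ principal v),
            (1 - (Multiset.card (gates v) : ℚ) / 2) := by
      rw [← Finset.sum_neg_distrib]; apply Finset.sum_congr rfl; intro v _; ring
    have h4 : DS = (∑ v, ((gates v).sum : ℚ)) - ∑ v, (Multiset.card (gates v) : ℚ) := by
      rw [hDS, Finset.sum_sub_distrib]
    rw [hID, hi, h3]
    linarith [hE2, hr, h1, h2, h4]
  have hbound : ∑ v ∈ Finset.univ.filter (fun v => ¬ principal v),
      ((Multiset.card (gates v) : ℚ) / 2 - 1)
      ≥ (1/2) * ((Finset.univ.filter (fun v => ¬ principal v)).card : ℚ) := by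
    have : ∀ v ∈ Finset.univ.filter (fun v => ¬ principal v),
        (1/2 : ℚ) ≤ (Multiset.card (gates v) : ℚ) / 2 - 1 := by
      intro v _
      have h := hgates3 v
      have : (3 : ℚ) ≤ (Multiset.card (gates v) : ℚ) := by exact_mod_cast h
      linarith
    calc (1/2) * ((Finset.univ.filter (fun v => ¬ principal v)).card : ℚ)
        = ∑ _v ∈ Finset.univ.filter (fun v => ¬ principal v), (1/2 : ℚ) := by
          rw [Finset.sum_const, nsmul_eq_mul]; ring
      _ ≤ _ := Finset.sum_le_sum this
  constructor
  · rw [key]; linarith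
  · intro hDS1; rw [key]; linarith
end

section
/- Let g : Γ → Γ be an expanding irreducible train track map and suppose g = g'' ∘ g' where g' : Γ → Γ' and g'' : Γ' → Γ are surjective tight graph maps. Set f = g' ∘ g'' : Γ' → Γ'. Then f is a train track map: for every k ≥ 1 and every edge e of Γ', the map f^k is locally injective on the interior of e. -/
/-! Combinatorial model of graph maps: a directed edge of a graph with (positively
oriented) edge set `α` is a pair `(a, b) : α × Bool`; an edge path is a list of directed
edges; a graph map sends each directed edge to a nonempty edge path, compatibly with
orientation reversal. Tightness of a path is reducedness, i.e. invariance under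
`FreeGroup.reduce`. -/

/-- Orientation reversal of a directed edge. -/
def bar {α : Type*} (e : α × Bool) : α × Bool := (e.1, !e.2)

/-- The inverse of an edge path. -/
def wordInv {α : Type*} (w : List (α × Bool)) : List (α × Bool) := (w.map bar).reverse

/-- Extension of an edge map to edge paths. -/
def mapWord {α β : Type*} (φ : α × Bool → List (β × Bool)) (w : List (α × Bool)) :
    List (β × Bool) := w.flatMap φ

/-- `φ` is a graph map: compatible with orientation reversal, edges go to nonempty paths. -/
def IsGraphMap {α β : Type*} (φ : α × Bool → List (β × Bool)) : Prop :=
  (∀ e, φ (bar e) = wordInv (φ e)) ∧ ∀ e, φ e ≠ []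

/-- `φ` is tight: the image of each edge is a reduced (tight) edge path. -/
def TightMap {α β : Type*} [DecidableEq β] (φ : α × Bool → List (β × Bool)) : Prop :=
  ∀ e, FreeGroup.reduce (φ e) = φ e

/-- `φ` is surjective: each edge of the target is crossed (in some orientation) by the
image of some edge. -/
def SurjMap {α β : Type*} (φ : α × Bool → List (β × Bool)) : Prop :=
  ∀ e', ∃ e, e' ∈ φ e ∨ bar e' ∈ φ e

section Aux

variable {α β γ : Type*}

/-- A word has an (adjacent) cancellation. -/
def HasCancel (w : List (α × Bool)) : Prop :=
  ∃ x b L₁ L₂, w = L₁ ++ (x, b) :: (x, !b) :: L₂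

theorem reduce_eq_self_iff [DecidableEq α] (w : List (α × Bool)) :
    FreeGroup.reduce w = w ↔ ¬ HasCancel w := by
  constructor
  · rintro h ⟨x, b, L₁, L₂, hw⟩
    exact FreeGroup.reduce.not (h.trans hw)
  · intro h
    induction w with
    | nil => rfl
    | cons a w ih =>
      have hw : ¬ HasCancel w := by
        rintro ⟨x, b, L₁, L₂, hw⟩
        exact h ⟨x, b, a :: L₁, L₂, by simp [hw]⟩
      rw [FreeGroup.reduce.cons, ih hw]
      cases w with
      | nil => rfl
      | cons c t =>
        have : ¬ (a.1 = c.1 ∧ a.2 = !c.2) := by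
          rintro ⟨h1, h2⟩
          have hc : (a.1, !a.2) = c := by rw [h1, h2]; simp
          exact h ⟨a.1, a.2, [], t, by simp [hc]⟩
        simp [this]

theorem hasCancel_infix {w v A B : List (α × Bool)} (hw : w = A ++ v ++ B)
    (hv : HasCancel v) : HasCancel w := by
  obtain ⟨x, b, L₁, L₂, hv⟩ := hv
  exact ⟨x, b, A ++ L₁, L₂ ++ B, by simp [hw, hv]⟩

theorem bar_bar (e : α × Bool) : bar (bar e) = e := by simp [bar]

theorem wordInv_append (u v : List (α × Bool)) :
    wordInv (u ++ v) = wordInv v ++ wordInv u := by simp [wordInv]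

theorem wordInv_wordInv (w : List (α × Bool)) : wordInv (wordInv w) = w := by
  simp [wordInv, List.map_reverse, List.map_map, Function.comp_def, bar_bar]

theorem hasCancel_wordInv {w : List (α × Bool)} (h : HasCancel w) :
    HasCancel (wordInv w) := by
  obtain ⟨x, b, L₁, L₂, hw⟩ := h
  refine ⟨x, !!b, wordInv L₂, wordInv L₁, ?_⟩
  rw [hw]
  simp [wordInv, bar]

theorem hasCancel_of_wordInv {w : List (α × Bool)} (h : HasCancel (wordInv w)) :
    HasCancel w := by
  have := hasCancel_wordInv h
  rwa [wordInv_wordInv] at this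

theorem mapWord_append (φ : α × Bool → List (β × Bool)) (u v : List (α × Bool)) :
    mapWord φ (u ++ v) = mapWord φ u ++ mapWord φ v := by simp [mapWord]

theorem iter_mapWord_append (φ : α × Bool → List (α × Bool)) (k : ℕ)
    (u v : List (α × Bool)) :
    (mapWord φ)^[k] (u ++ v) = (mapWord φ)^[k] u ++ (mapWord φ)^[k] v := by
  induction k generalizing u v with
  | zero => rfl
  | succ k ih => simp [Function.iterate_succ_apply, mapWord_append, ih]

theorem mapWord_wordInv {φ : α × Bool → List (β × Bool)}
    (hφ : ∀ e, φ (bar e) = wordInv (φ e)) (w : List (α × Bool)) :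
    mapWord φ (wordInv w) = wordInv (mapWord φ w) := by
  induction w with
  | nil => rfl
  | cons a w ih =>
    have h1 : wordInv (a :: w) = wordInv w ++ [bar a] := by simp [wordInv]
    have h2 : mapWord φ (a :: w) = φ a ++ mapWord φ w := by simp [mapWord]
    rw [h1, mapWord_append, h2, wordInv_append, ih]
    congr 1
    simp [mapWord, hφ a]

theorem iter_mapWord_wordInv {φ : α × Bool → List (α × Bool)}
    (hφ : ∀ e, φ (bar e) = wordInv (φ e)) (k : ℕ) (w : List (α × Bool)) :
    (mapWord φ)^[k] (wordInv w) = wordInv ((mapWord φ)^[k] w) := by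
  induction k generalizing w with
  | zero => rfl
  | succ k ih => simp [Function.iterate_succ_apply, mapWord_wordInv hφ, ih]

theorem hasCancel_mapWord {φ : α × Bool → List (β × Bool)}
    (hinv : ∀ e, φ (bar e) = wordInv (φ e)) (hne : ∀ e, φ e ≠ [])
    {w : List (α × Bool)} (h : HasCancel w) : HasCancel (mapWord φ w) := by
  obtain ⟨x, b, L₁, L₂, hw⟩ := h
  obtain ⟨M, y, hM⟩ := (List.eq_nil_or_concat (φ (x, b))).resolve_left (hne (x, b))
  have hbar : φ (x, !b) = wordInv (φ (x, b)) := hinv (x, b)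
  refine ⟨y.1, y.2, mapWord φ L₁ ++ M, wordInv M ++ mapWord φ L₂, ?_⟩
  have : (x, !b) :: L₂ = [(x, !b)] ++ L₂ := rfl
  rw [hw]
  have expand : mapWord φ (L₁ ++ (x, b) :: (x, !b) :: L₂)
      = mapWord φ L₁ ++ φ (x, b) ++ φ (x, !b) ++ mapWord φ L₂ := by
    simp [mapWord]
  rw [expand, hbar, hM, List.concat_eq_append]
  have hInvM : wordInv (M ++ [y]) = bar y :: wordInv M := by simp [wordInv]
  rw [hInvM]
  simp [bar]

theorem mapWord_mapWord (φ : β × Bool → List (γ × Bool)) (ψ : α × Bool → List (β × Bool))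
    (w : List (α × Bool)) :
    mapWord φ (mapWord ψ w) = mapWord (fun e => mapWord φ (ψ e)) w := by
  simp [mapWord, List.flatMap_assoc]

end Aux

/-- if `g = g'' ∘ g'` is an expanding irreducible train track map with
`g', g''` surjective tight graph maps, then `f = g' ∘ g''` is a train track map: every
power of `f` is tight on every edge. -/
theorem stmt5 {α β : Type*} [DecidableEq α] [DecidableEq β]
    (g' : α × Bool → List (β × Bool)) (g'' : β × Bool → List (α × Bool))
    (hg'gm : IsGraphMap g') (hg''gm : IsGraphMap g'')
    (hg't : TightMap g') (hg''t : TightMap g'')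
    (hg's : SurjMap g') (hg''s : SurjMap g'')
    (g : α × Bool → List (α × Bool)) (hg : g = fun e => mapWord g'' (g' e))
    (f : β × Bool → List (β × Bool)) (hf : f = fun e => mapWord g' (g'' e))
    -- `g` is a train track map,
    (htt : ∀ k, ∀ e : α × Bool,
      FreeGroup.reduce ((mapWord g)^[k] [e]) = (mapWord g)^[k] [e])
    -- `g` is expanding,
    (hexp : ∀ e : α × Bool,
      Filter.Tendsto (fun n => ((mapWord g)^[n] [e]).length) Filter.atTop Filter.atTop)
    -- and `g` is irreducible.
    (hirr : ∀ e e' : α × Bool, ∃ k,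
      e' ∈ (mapWord g)^[k] [e] ∨ bar e' ∈ (mapWord g)^[k] [e]) :
    ∀ k, 1 ≤ k → ∀ e : β × Bool,
      FreeGroup.reduce ((mapWord f)^[k] [e]) = (mapWord f)^[k] [e] := by
  have comm : ∀ k w, (mapWord g)^[k] (mapWord g'' w)
      = mapWord g'' ((mapWord f)^[k] w) := by
    intro k
    induction k with
    | zero => intro w; rfl
    | succ k ih =>
      intro w
      rw [Function.iterate_succ_apply, Function.iterate_succ_apply]
      have step : mapWord g (mapWord g'' w) = mapWord g'' (mapWord f w) := by
        rw [hg, hf, mapWord_mapWord, mapWord_mapWord]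
        congr 1
        funext e
        rw [mapWord_mapWord]
      rw [step, ih]
  have main : ∀ k (e : β × Bool) (e' : α × Bool), e ∈ g' e' →
      ¬ HasCancel ((mapWord f)^[k] [e]) := by
    intro k e e' hmem hc
    obtain ⟨L1, L2, hsplit⟩ := List.append_of_mem hmem
    have hred : ¬ HasCancel ((mapWord g)^[k+1] [e']) :=
      (reduce_eq_self_iff _).mp (htt (k+1) e')
    apply hred
    have h1 : (mapWord g)^[k+1] [e'] = mapWord g'' ((mapWord f)^[k] (g' e')) := by
      rw [Function.iterate_succ_apply]
      have h0 : mapWord g [e'] = mapWord g'' (g' e') := by simp [mapWord, hg]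
      rw [h0, comm]
    have h2 : (mapWord f)^[k] (g' e')
        = (mapWord f)^[k] L1 ++ (mapWord f)^[k] [e] ++ (mapWord f)^[k] L2 := by
      rw [hsplit]
      have : L1 ++ e :: L2 = L1 ++ [e] ++ L2 := by simp
      rw [this, iter_mapWord_append, iter_mapWord_append]
    rw [h1, h2, mapWord_append, mapWord_append]
    exact hasCancel_infix rfl (hasCancel_mapWord hg''gm.1 hg''gm.2 hc)
  intro k _ e
  rw [reduce_eq_self_iff]
  obtain ⟨e', he'⟩ := hg's e
  rcases he' with h | h
  · exact main k e e' h
  · intro hc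
    have hfgm : ∀ x, f (bar x) = wordInv (f x) := by
      intro x
      simp only [hf]
      rw [hg''gm.1, mapWord_wordInv hg'gm.1]
    have heq : (mapWord f)^[k] [e] = wordInv ((mapWord f)^[k] [bar e]) := by
      have he : [e] = wordInv [bar e] := by simp [wordInv, bar_bar]
      rw [he, iter_mapWord_wordInv hfgm]
    rw [heq] at hc
    exact main k (bar e) e' h (hasCancel_of_wordInv hc)
end
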